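/- Let α, β be real numbers with α < β and let t ∈ ℝ. If Θ_{[α,β]}(t) ≤ (α + β)/2, then t ≤ min(β, Θ_{[α,β]}(t) + 1/2). If Θ_{[α,β]}(t) ≥ (α + β)/2, then t ≥ max(α, Θ_{[α,β]}(t) − 1/2). -/
import Mathlib


/-- The clipping function `θ_{[α,β]}(t) = max(α, min(β, t))`. -/
noncomputable def thetaClip (α β t : ℝ) : ℝ := max α (min β t)

/-- The smoothed clipping function
`Θ_{[α,β]}(t) = θ_{[α,β]}(t) + e^{-|α-t|}/2 - e^{-|β-t|}/2`. -/
noncomputable def ThetaClip (α β t : ℝ) : ℝ :=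
  thetaClip α β t + Real.exp (-|α - t|) / 2 - Real.exp (-|β - t|) / 2

/-- Lemma 6.3(9): bounds on `t` in terms of `Θ_{[α,β]}(t)`. -/
theorem ThetaClip_bound_on_t (α β : ℝ) (h : α < β) (t : ℝ) :
    (ThetaClip α β t ≤ (α + β) / 2 → t ≤ min β (ThetaClip α β t + 1/2)) ∧
    (ThetaClip α β t ≥ (α + β) / 2 → t ≥ max α (ThetaClip α β t - 1/2)) := by
  have hexp : α - β + 1 < Real.exp (α - β) :=
    Real.add_one_lt_exp (by intro hc; nlinarith [hc] : α - β ≠ 0)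
  rcases le_total t α with h1 | h1
  · -- t ≤ α
    have hΘval : ThetaClip α β t = α + Real.exp (t - α) / 2 - Real.exp (t - β) / 2 := by
      have hab : |α - t| = α - t := abs_of_nonneg (by linarith)
      have hbb : |β - t| = β - t := abs_of_nonneg (by linarith)
      simp only [ThetaClip, thetaClip, min_eq_right (show t ≤ β by linarith),
        max_eq_left h1, hab, hbb]
      ring_nf
    have hmono : Real.exp (t - β) ≤ Real.exp (t - α) :=
      Real.exp_le_exp.mpr (by linarith)
    have hle1 : Real.exp (t - α) ≤ 1 := Real.exp_le_one_iff.mpr (by linarith)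
    have hsplit : Real.exp (t - β) = Real.exp (t - α) * Real.exp (α - β) := by
      rw [← Real.exp_add]; ring_nf
    have hpos : 0 < Real.exp (t - β) := Real.exp_pos _
    constructor
    · intro _
      apply le_min (by linarith)
      rw [hΘval]; linarith
    · intro hΘ
      exfalso
      rw [hΘval] at hΘ
      nlinarith [hΘ, hsplit, hle1, hexp, Real.exp_pos (α - β)]
  · rcases le_total t β with h2 | h2
    · -- α ≤ t ≤ β
      have hΘval : ThetaClip α β t = t + Real.exp (α - t) / 2 - Real.exp (t - β) / 2 := by
        have hab : |α - t| = t - α := by rw [abs_of_nonpos (by linarith)]; ring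
        have hbb : |β - t| = β - t := abs_of_nonneg (by linarith)
        simp only [ThetaClip, thetaClip, min_eq_right h2, max_eq_right h1, hab, hbb]
        ring_nf
      have ha1 : Real.exp (α - t) ≤ 1 := Real.exp_le_one_iff.mpr (by linarith)
      have hb1 : Real.exp (t - β) ≤ 1 := Real.exp_le_one_iff.mpr (by linarith)
      have hap : 0 < Real.exp (α - t) := Real.exp_pos _
      have hbp : 0 < Real.exp (t - β) := Real.exp_pos _
      constructor
      · intro _
        apply le_min h2
        rw [hΘval]; linarith
      · intro _
        rw [ge_iff_le]; apply max_le h1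
        rw [hΘval]; linarith
    · -- β ≤ t
      have hΘval : ThetaClip α β t = β + Real.exp (α - t) / 2 - Real.exp (β - t) / 2 := by
        have hab : |α - t| = t - α := by rw [abs_of_nonpos (by linarith)]; ring
        have hbb : |β - t| = t - β := by rw [abs_of_nonpos (by linarith)]; ring
        simp only [ThetaClip, thetaClip, min_eq_left h2,
          max_eq_right h.le, hab, hbb]
        ring_nf
      have hmono : Real.exp (α - t) ≤ Real.exp (β - t) :=
        Real.exp_le_exp.mpr (by linarith)
      have hle1 : Real.exp (β - t) ≤ 1 := Real.exp_le_one_iff.mpr (by linarith)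
      have hsplit : Real.exp (α - t) = Real.exp (β - t) * Real.exp (α - β) := by
        rw [← Real.exp_add]; ring_nf
      constructor
      · intro hΘ
        exfalso
        rw [hΘval] at hΘ
        nlinarith [hΘ, hsplit, hle1, hexp, Real.exp_pos (β - t)]
      · intro _
        rw [ge_iff_le]; apply max_le (by linarith)
        rw [hΘval]; linarith
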